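/- arXiv:1809.04362 — 2 statements merged into one kernel-verified Lean document; each statement's English description precedes it below -/
import Mathlib

section
/- Let P be a single-peaked preference profile, let d be a Nash-stable delegation function, and let K = Gurus(d). Then for every voter i ∉ K, the guru gu(i,d) of i is the alternative that i prefers among: the closest element of K below i (if any), the closest element of K above i (if any), and abstention 0. -/
namespace LD

variable {V : Type*}

/-- Alternatives: `none` is abstention (0), `some j` means voter `j`. -/
abbrev Alt (V : Type*) := Option V

/-- A preference profile: each voter has a strict linear (total) order on alternatives. -/
def IsProfile (pref : V → Option V → Option V → Prop) : Prop :=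
  ∀ i : V, IsStrictTotalOrder (Option V) (pref i)

/-- Voter `i` is an abstainer if she prefers abstention to voting. -/
def Abstainer (pref : V → Option V → Option V → Prop) (i : V) : Prop :=
  pref i none (some i)

/-- `j ∈ Acc i`: voter `i` accepts `j` as a guru. -/
def Acc (pref : V → Option V → Option V → Prop) (i j : V) : Prop :=
  j ≠ i ∧ pref i (some j) (some i) ∧ pref i (some j) none

/-- Gurus of a delegation function: voters who vote themselves. -/
def Gurus (d : V → Option V) : Set V := {i | d i = some i}

/-- `K` is a kernel of the digraph with vertex set `S` and arc relation `A`: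
independent and absorbing. -/
def Kernel (S : Set V) (A : V → V → Prop) (K : Set V) : Prop :=
  K ⊆ S ∧ (∀ i ∈ K, ∀ j ∈ K, ¬ A i j) ∧ ∀ u ∈ S, u ∉ K → ∃ k ∈ K, A u k

variable [DecidableEq V] [Fintype V]

/-- Fuel-based iteration of the delegation function. -/
def guIter (d : V → Option V) : ℕ → V → Option V
  | 0, _ => none
  | k + 1, i =>
    match d i with
    | none => none
    | some j => if j = i then some i else guIter d k j

/-- The guru of voter `i`: the voter reached from `i` by following delegations
(`none`, i.e. abstention, if the delegations from `i` abstain or enter a cycle). -/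
def gu (d : V → Option V) (i : V) : Option V :=
  guIter d (Fintype.card V + 1) i

/-- Nash-stability of a delegation function. -/
def NashStable (pref : V → Option V → Option V → Prop) (d : V → Option V) : Prop :=
  ∀ i : V, ∀ g : Option V,
    ((∃ j ∈ Gurus d, g = some j) ∨ g = none ∨ g = some i) →
    g ≠ gu d i → pref i (gu d i) g

end LD

namespace LD

/-- Single-peaked preference profile w.r.t. the order on `Fin n`. -/
def SinglePeaked {n : ℕ} (pref : Fin n → Option (Fin n) → Option (Fin n) → Prop) : Prop :=
  ∀ i j k : Fin n, ((i < j ∧ j < k) ∨ (k < j ∧ j < i)) → pref i (some j) (some k)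

/-- The candidate alternatives for a non-guru voter `i`: abstention, the closest
guru below `i` (if any), and the closest guru above `i` (if any). -/
def ClosestCand {n : ℕ} (d : Fin n → Option (Fin n)) (i : Fin n) :
    Set (Option (Fin n)) :=
  {none} ∪
    {g | ∃ b ∈ Gurus d, b < i ∧ (∀ b' ∈ Gurus d, b' < i → b' ≤ b) ∧ g = some b} ∪
    {g | ∃ a ∈ Gurus d, i < a ∧ (∀ a' ∈ Gurus d, i < a' → a ≤ a') ∧ g = some a}

end LD

namespace LD

lemma guIter_guru {V : Type*} [DecidableEq V] (d : V → Option V) :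
    ∀ k x j, guIter d k x = some j → d j = some j := by
  intro k
  induction k with
  | zero => intro x j h; simp [guIter] at h
  | succ k ih =>
    intro x j h
    unfold guIter at h
    cases hdx : d x with
    | none => rw [hdx] at h; simp at h
    | some y =>
      rw [hdx] at h
      by_cases hy : y = x
      · subst hy
        simp at h
        subst h; exact hdx
      · simp [hy] at h
        exact ih y j h

lemma gu_guru {V : Type*} [DecidableEq V] [Fintype V] (d : V → Option V)
    {i j : V} (h : gu d i = some j) : j ∈ Gurus d :=
  guIter_guru d _ i j h

end LD

open LD in
/-- gurus at equilibrium under single-peaked preferences.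
If `P` is single-peaked, `d` is Nash-stable and `i ∉ Gurus d`, then the guru of
`i` is the alternative `i` prefers among: the closest guru below `i` (if any),
the closest guru above `i` (if any), and abstention. -/
theorem guru_is_preferred_closest {n : ℕ}
    (pref : Fin n → Option (Fin n) → Option (Fin n) → Prop)
    (hP : IsProfile pref) (hSP : SinglePeaked pref)
    (d : Fin n → Option (Fin n)) (hd : NashStable pref d)
    (i : Fin n) (hi : i ∉ Gurus d) :
    gu d i ∈ ClosestCand d i ∧
      ∀ g ∈ ClosestCand d i, g ≠ gu d i → pref i (gu d i) g := by
  haveI := hP i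
  have hasymm : ∀ a b, pref i a b → pref i b a → False := by
    intro a b h1 h2
    exact absurd (trans_of (pref i) h1 h2) (irrefl_of (pref i) a)
  constructor
  · cases hgu : gu d i with
    | none => exact Or.inl (Or.inl rfl)
    | some k =>
      have hkG : k ∈ Gurus d := gu_guru d hgu
      have hki : k ≠ i := fun h => hi (h ▸ hkG)
      rcases lt_or_gt_of_ne hki with hlt | hgt
      · refine Or.inl (Or.inr ⟨k, hkG, hlt, ?_, rfl⟩)
        intro b' hb' hb'i
        by_contra hcon
        push_neg at hcon
        have h1 : pref i (some b') (some k) := hSP i b' k (Or.inr ⟨hcon, hb'i⟩)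
        have h2 : pref i (gu d i) (some b') := by
          refine hd i (some b') (Or.inl ⟨b', hb', rfl⟩) ?_
          rw [hgu]; intro h; exact absurd (Option.some_injective _ h) (ne_of_gt hcon)
        rw [hgu] at h2
        exact hasymm _ _ h1 h2
      · refine Or.inr ⟨k, hkG, hgt, ?_, rfl⟩
        intro a' ha' hia'
        by_contra hcon
        push_neg at hcon
        have h1 : pref i (some a') (some k) := hSP i a' k (Or.inl ⟨hia', hcon⟩)
        have h2 : pref i (gu d i) (some a') := by
          refine hd i (some a') (Or.inl ⟨a', ha', rfl⟩) ?_
          rw [hgu]; intro h; exact absurd (Option.some_injective _ h) (ne_of_lt hcon)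
        rw [hgu] at h2
        exact hasymm _ _ h1 h2
  · intro g hg hne
    rcases hg with (hg | ⟨b, hb, _, _, rfl⟩) | ⟨a, ha, _, _, rfl⟩
    · rcases hg with rfl
      exact hd i none (Or.inr (Or.inl rfl)) hne
    · exact hd i (some b) (Or.inl ⟨b, hb, rfl⟩) hne
    · exact hd i (some a) (Or.inl ⟨a, ha, rfl⟩) hne
end

section
/- Let P be a symmetrical preference profile (i ∈ Acc(j) iff j ∈ Acc(i)) and consider a best-response dynamics (d_t). If at some step t the voter j = T(t) holding the token decides to vote (d_t(j) = j), then j remains a guru at every later step: d_{t'}(j) = j for all t' ≥ t. -/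
namespace LD

variable {V : Type*} [DecidableEq V] [Fintype V]

/-- `dnext` is obtained from `dprev` by a *best response* of voter `i`:
only `i`'s delegation may change, the resulting guru of `i` is (weakly) her most
preferred among all outcomes achievable by changing her own delegation, and if
her current outcome is already best she does not change her delegation
(so that a best response is also an improved response). -/
def BestResponse (pref : V → Option V → Option V → Prop)
    (dprev : V → Option V) (i : V) (dnext : V → Option V) : Prop :=
  (∀ j : V, j ≠ i → dnext j = dprev j) ∧
  (∀ c : Option V,
      gu (Function.update dprev i c) i ≠ gu dnext i →
      pref i (gu dnext i) (gu (Function.update dprev i c) i)) ∧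
  (gu dnext i = gu dprev i → dnext i = dprev i)

/-- `dnext` is obtained from `dprev` by an *improved response* of voter `i`:
only `i`'s delegation may change, and either her outcome strictly improves, or
no strictly improving move exists and she keeps her delegation unchanged. -/
def ImprovedResponse (pref : V → Option V → Option V → Prop)
    (dprev : V → Option V) (i : V) (dnext : V → Option V) : Prop :=
  (∀ j : V, j ≠ i → dnext j = dprev j) ∧
  (pref i (gu dnext i) (gu dprev i) ∨
    (dnext i = dprev i ∧
      ∀ c : Option V, ¬ pref i (gu (Function.update dprev i c) i) (gu dprev i)))

/-- Every voter receives the token at least once during the steps `a,…,b`. -/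
def Covers (T : ℕ → V) (a b : ℕ) : Prop :=
  ∀ i : V, ∃ t : ℕ, a ≤ t ∧ t ≤ b ∧ T t = i

/-- Every voter receives the token infinitely many times. -/
def InfOften (T : ℕ → V) : Prop :=
  ∀ i : V, ∀ t : ℕ, ∃ t' : ℕ, t < t' ∧ T t' = i

end LD

namespace LD
variable {V : Type*} [DecidableEq V] [Fintype V]

omit [Fintype V] in
lemma guIter_self (d : V → Option V) (g : V) (h : d g = some g) (k : ℕ) :
    guIter d (k + 1) g = some g := by
  simp [guIter, h]

lemma gu_self (d : V → Option V) (g : V) (h : d g = some g) : gu d g = some g :=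
  guIter_self d g h _

lemma gu_update_none (d : V → Option V) (i : V) :
    gu (Function.update d i none) i = none := by
  unfold gu guIter
  simp [Function.update_self]

lemma gu_delegate (d : V → Option V) (i g : V) (hg : d g = some g) (hne : g ≠ i) :
    gu (Function.update d i (some g)) i = some g := by
  have hcard : 0 < Fintype.card V := Fintype.card_pos_iff.mpr ⟨i⟩
  unfold gu
  rw [show Fintype.card V + 1 = ((Fintype.card V - 1) + 1) + 1 by omega]
  unfold guIter
  simp only [Function.update_self, hne, if_false]
  exact guIter_self _ g (by rw [Function.update_of_ne hne]; exact hg) _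

omit [Fintype V] in
lemma guIter_reaches (d : V → Option V) :
    ∀ (k : ℕ) (i g : V), guIter d k i = some g → d g = some g := by
  intro k
  induction k with
  | zero => intro i g h; simp [guIter] at h
  | succ k ih =>
    intro i g h
    unfold guIter at h
    cases hd : d i with
    | none => rw [hd] at h; simp at h
    | some c =>
      rw [hd] at h
      by_cases hc : c = i
      · simp [hc] at h; rw [← h]; rw [hc] at hd; rw [h] at hd ⊢; exact hd
      · simp [hc] at h; exact ih c g h

lemma gu_reaches (d : V → Option V) (i g : V) (h : gu d i = some g) : d g = some g :=
  guIter_reaches d _ i g h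

omit [DecidableEq V] [Fintype V] in
lemma last_guru (d : ℕ → V → Option V) (g : V) (t m : ℕ) (htm : t ≤ m)
    (hm : d m g = some g) :
    (∀ r, t ≤ r → r ≤ m → d r g = some g) ∨
    ∃ r, t ≤ r ∧ r < m ∧ d r g ≠ some g ∧ d (r + 1) g = some g := by
  induction m with
  | zero =>
    left; intro r h1 h2
    have : r = 0 := by omega
    subst this; exact hm
  | succ m ih =>
    by_cases htm' : t ≤ m
    · by_cases hdm : d m g = some g
      · rcases ih htm' hdm with h | ⟨r, h1, h2, h3, h4⟩
        · left; intro r hr1 hr2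
          rcases Nat.lt_or_ge r (m + 1) with h' | h'
          · exact h r hr1 (by omega)
          · have : r = m + 1 := by omega
            subst this; exact hm
        · right; exact ⟨r, h1, by omega, h3, h4⟩
      · right; exact ⟨m, htm', by omega, hdm, hm⟩
    · left; intro r h1 h2
      have : r = m + 1 := by omega
      subst this; exact hm

end LD

open LD in
/-- under symmetry, a voter who decides to vote stays a guru.
Let `P` be a symmetrical preference profile and `d` a best-response dynamics.
If at step `t+1` the voter `j = T (t+1)` holding the token decides to vote
(`d (t+1) j = j`), then `j` remains a guru at every later step. -/
theorem symmetric_brd_guru_forever {V : Type*} [DecidableEq V] [Fintype V]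
    (pref : V → Option V → Option V → Prop) (hP : IsProfile pref)
    (hsym : ∀ i j : V, Acc pref i j ↔ Acc pref j i)
    (d : ℕ → V → Option V) (T : ℕ → V)
    (hBR : ∀ t : ℕ, BestResponse pref (d t) (T (t + 1)) (d (t + 1)))
    (t : ℕ) (j : V) (hj : T (t + 1) = j) (hvote : d (t + 1) j = some j) :
    ∀ t' : ℕ, t + 1 ≤ t' → d t' j = some j := by
  haveI hPj := hP j
  have hgut1 : gu (d (t + 1)) j = some j := gu_self _ _ hvote
  -- j strictly prefers voting to abstaining
  have hJnone : pref j (some j) none := by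
    have B0 := hBR t; rw [hj] at B0
    have h1 : gu (Function.update (d t) j none) j = none := gu_update_none _ _
    have := B0.2.1 none (by rw [h1, hgut1]; simp)
    rwa [h1, hgut1] at this
  intro t'
  induction t' using Nat.strong_induction_on with
  | _ s IH =>
    intro hs
    rcases Nat.lt_or_ge (t + 1) s with hlt | hge
    swap
    · have : s = t + 1 := by omega
      subst this; exact hvote
    obtain ⟨m, rfl⟩ : ∃ m, s = m + 1 := ⟨s - 1, by omega⟩
    have hm : t + 1 ≤ m := by omega
    have hdmj : d m j = some j := IH m (by omega) hm
    by_cases hT : T (m + 1) = j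
    · have B := hBR m; rw [hT] at B
      have hgum : gu (d m) j = some j := gu_self _ _ hdmj
      by_cases hEq : gu (d (m + 1)) j = gu (d m) j
      · rw [B.2.2 hEq, hdmj]
      · exfalso
        rw [hgum] at hEq
        have hupd : gu (Function.update (d m) j (some j)) j = some j :=
          gu_self _ _ (by rw [Function.update_self])
        have hpref1 : pref j (gu (d (m + 1)) j) (some j) := by
          have := B.2.1 (some j) (by rw [hupd]; exact fun h => hEq h.symm)
          rwa [hupd] at this
        cases hgn : gu (d (m + 1)) j with
        | none =>
          rw [hgn] at hpref1
          exact (irrefl_of (pref j) none) (trans_of (pref j) hpref1 hJnone)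
        | some g =>
          rw [hgn] at hpref1 hEq
          have hgj : g ≠ j := fun h => hEq (by rw [h])
          have hprefg0 : pref j (some g) none := trans_of (pref j) hpref1 hJnone
          have hAcc' : Acc pref g j := (hsym j g).mp ⟨hgj, hpref1, hprefg0⟩
          haveI hPg := hP g
          have hguru : d (m + 1) g = some g := gu_reaches _ _ _ hgn
          have hmg : d m g = some g := by rw [← (hBR m).1 g (hT ▸ hgj)]; exact hguru
          rcases last_guru d g t m (by omega) hmg with hall | ⟨r, hr1, hr2, hr3, hr4⟩
          · -- g was a guru already at step t
            have hgt : d t g = some g := hall t le_rfl (by omega)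
            have B0 := hBR t; rw [hj] at B0
            have h1 : gu (Function.update (d t) j (some g)) j = some g :=
              gu_delegate _ _ _ hgt hgj
            have hb := B0.2.1 (some g)
              (by rw [h1, hgut1]; exact fun h => hgj (Option.some.inj h))
            rw [h1, hgut1] at hb
            exact (irrefl_of (pref j) (some j)) (trans_of (pref j) hb hpref1)
          · -- g became a guru at step r+1 with t+1 ≤ r
            have hTr : T (r + 1) = g := by
              by_contra hne
              exact hr3 (((hBR r).1 g (fun h => hne h.symm)).symm.trans hr4)
            have hrt : t + 1 ≤ r := by
              rcases Nat.lt_or_ge t r with h | h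
              · omega
              · exfalso
                have : r = t := by omega
                subst this
                rw [hj] at hTr
                exact hgj hTr.symm
            have hrj : d r j = some j := IH r (by omega) hrt
            have Br := hBR r; rw [hTr] at Br
            have h1 : gu (Function.update (d r) g (some j)) g = some j :=
              gu_delegate _ _ _ hrj hAcc'.1
            have h2 : gu (d (r + 1)) g = some g := gu_self _ _ hr4
            have hb := Br.2.1 (some j)
              (by rw [h1, h2]; exact fun h => hAcc'.1 (Option.some.inj h))
            rw [h1, h2] at hb
            exact (irrefl_of (pref g) (some g)) (trans_of (pref g) hb hAcc'.2.1)
    · rw [(hBR m).1 j (fun h => hT (h ▸ rfl)), hdmj]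
end
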